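/- Let f: ℝ → ℝ be smooth with f ≥ 1, f(0) = 1, f strictly increasing on [0,∞), and f(Z)/Z → 1 as Z → ∞. Define C_v = ∫₀^∞ dZ / (f(Z)^k √(f(Z)^{2k} − v²)) for v ∈ [0,1) and integer k ≥ 2. Then C_v → ∞ as v → 1⁻. -/

import Mathlib

open Filter MeasureTheory Set

lemma quad_bound (g : ℝ → ℝ) (hg : ContDiff ℝ (⊤ : ℕ∞) g) (hg0 : g 0 = 1) (hg1 : ∀ Z, 1 ≤ g Z) :
    ∃ K δ : ℝ, 0 < K ∧ 0 < δ ∧ δ ≤ 1 ∧ ∀ Z ∈ Set.Icc 0 δ, g Z ≤ 1 + K * Z^2 := by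
  have hdg : ContDiff ℝ (⊤ : ℕ∞) (deriv g) := (contDiff_infty_iff_deriv.mp (hg.of_le (by simp))).2
  obtain ⟨K, t, ht, hlip⟩ := ((hdg.of_le (by exact_mod_cast le_top) : ContDiff ℝ 1 (deriv g)).contDiffAt).exists_lipschitzOnWith
  obtain ⟨ε, hε, hball⟩ := Metric.mem_nhds_iff.mp ht
  have hmin : IsLocalMin g 0 := Filter.Eventually.of_forall fun x => by rw [hg0]; exact hg1 x
  have hd0 : deriv g 0 = 0 := hmin.deriv_eq_zero
  refine ⟨(K:ℝ) + 1, min (ε/2) 1, by positivity, by positivity, min_le_right _ _, ?_⟩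
  intro Z hZ
  obtain ⟨hZ0, hZδ⟩ := hZ
  rcases eq_or_lt_of_le hZ0 with h | h
  · rw [← h, hg0]; nlinarith [K.coe_nonneg]
  · have hsub : Set.Icc (0:ℝ) Z ⊆ t := by
      intro x hx
      apply hball
      rw [Metric.mem_ball, Real.dist_eq, sub_zero]
      calc |x| ≤ Z := by rw [abs_of_nonneg hx.1]; exact hx.2
        _ ≤ ε/2 := le_trans hZδ (min_le_left _ _)
        _ < ε := by linarith
    obtain ⟨c, hc, hslope⟩ := exists_deriv_eq_slope g h (hg.continuous.continuousOn)
      (hg.differentiable (by simp)).differentiableOn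
    have hct : c ∈ t := hsub ⟨hc.1.le, hc.2.le⟩
    have h0t : (0:ℝ) ∈ t := hsub ⟨le_refl 0, h.le⟩
    have hbnd : |deriv g c| ≤ (K:ℝ) * Z := by
      have := hlip.dist_le_mul c hct 0 h0t
      rw [Real.dist_eq, Real.dist_eq, hd0, sub_zero, sub_zero] at this
      calc |deriv g c| ≤ (K:ℝ) * |c| := this
        _ ≤ (K:ℝ) * Z := by
            apply mul_le_mul_of_nonneg_left _ K.coe_nonneg
            rw [abs_of_nonneg hc.1.le]; exact hc.2.le
    have : g Z - 1 = deriv g c * Z := by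
      rw [hslope, hg0]; field_simp; ring
    nlinarith [abs_nonneg (deriv g c), le_abs_self (deriv g c), hc.1, hc.2]

lemma log_integral (A a b δ : ℝ) (hA : 0 < A) (ha : 0 < a) (hb : 0 < b) (hδ : 0 < δ) :
    ∫ Z in Set.Icc (0:ℝ) δ, 1 / (A * (a + b * Z))
      = (A * b)⁻¹ * (Real.log (a + b * δ) - Real.log a) := by
  have hpos : ∀ Z ∈ Set.uIcc (0:ℝ) δ, 0 < a + b * Z := by
    intro Z hZ
    rw [Set.uIcc_of_le hδ.le] at hZ
    nlinarith [hZ.1]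
  have hderiv : ∀ Z ∈ Set.uIcc (0:ℝ) δ,
      HasDerivAt (fun Z => (A * b)⁻¹ * Real.log (a + b * Z)) (1 / (A * (a + b * Z))) Z := by
    intro Z hZ
    have h1 : HasDerivAt (fun Z : ℝ => a + b * Z) b Z := by
      simpa using ((hasDerivAt_id Z).const_mul b).const_add a
    have h2 := (h1.log (hpos Z hZ).ne')
    have := h2.const_mul ((A * b)⁻¹)
    refine this.congr_deriv ?_
    have := hb.ne'
    field_simp
  have hci : ContinuousOn (fun Z => 1 / (A * (a + b * Z))) (Set.uIcc (0:ℝ) δ) := by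
    apply ContinuousOn.div continuousOn_const
    · fun_prop
    · intro Z hZ
      have := hpos Z hZ
      positivity
  have key := intervalIntegral.integral_eq_sub_of_hasDerivAt hderiv (hci.intervalIntegrable)
  rw [MeasureTheory.integral_Icc_eq_integral_Ioc, ← intervalIntegral.integral_of_le hδ.le, key]
  simp [mul_comm]
  ring

lemma integrable_phi (k : ℕ) (hk : 2 ≤ k) (f : ℝ → ℝ) (hfc : Continuous f) (hf1 : ∀ Z, 1 ≤ f Z)
    (hasymp : Tendsto (fun Z : ℝ => f Z / Z) atTop (nhds 1)) {v : ℝ} (hv : v^2 < 1) :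
    IntegrableOn (fun Z => 1 / (f Z ^ k * Real.sqrt (f Z ^ (2*k) - v^2))) (Set.Ici 0) := by
  set φ := fun Z => 1 / (f Z ^ k * Real.sqrt (f Z ^ (2*k) - v^2)) with hφ
  have hfpos : ∀ Z, 0 < f Z := fun Z => lt_of_lt_of_le one_pos (hf1 Z)
  have hsub : ∀ Z, 1 - v^2 ≤ f Z ^ (2*k) - v^2 := by
    intro Z
    have : (1:ℝ) ≤ f Z ^ (2*k) := one_le_pow₀ (hf1 Z)
    linarith
  have hsqpos : ∀ Z, 0 < Real.sqrt (f Z ^ (2*k) - v^2) := by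
    intro Z
    apply Real.sqrt_pos.mpr; linarith [hsub Z]
  have hdenpos : ∀ Z, 0 < f Z ^ k * Real.sqrt (f Z ^ (2*k) - v^2) := by
    intro Z; exact mul_pos (pow_pos (hfpos Z) k) (hsqpos Z)
  have hcont : Continuous φ := by
    apply continuous_const.div
    · exact (hfc.pow k).mul ((Real.continuous_sqrt).comp ((hfc.pow (2*k)).sub continuous_const))
    · exact fun Z => (hdenpos Z).ne'
  -- eventually f Z ≥ Z / 2
  have hev : ∀ᶠ Z in atTop, (2:ℝ)⁻¹ ≤ f Z / Z :=
    hasymp.eventually (eventually_ge_nhds (by norm_num))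
  obtain ⟨R₀, hR₀⟩ := eventually_atTop.mp hev
  set R := max R₀ 2 with hR
  have hR2 : (2:ℝ) ≤ R := le_max_right _ _
  have hRpos : (0:ℝ) < R := by linarith
  have hbig : ∀ Z, R ≤ Z → Z^2 / 4 ≤ f Z ^ k := by
    intro Z hZ
    have hZ2 : (2:ℝ) ≤ Z := le_trans hR2 hZ
    have hZpos : (0:ℝ) < Z := by linarith
    have h1 : (2:ℝ)⁻¹ ≤ f Z / Z := hR₀ Z (le_trans (le_max_left _ _) hZ)
    have h2 : Z / 2 ≤ f Z := by
      rw [le_div_iff₀ hZpos] at h1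
      linarith [h1]
    have h3 : (Z/2)^2 ≤ (Z/2)^k := by
      apply pow_le_pow_right₀ (by linarith) hk
    calc Z^2/4 = (Z/2)^2 := by ring
      _ ≤ (Z/2)^k := h3
      _ ≤ f Z ^ k := pow_le_pow_left₀ (by linarith) h2 k
  set s := Real.sqrt (1 - v^2) with hs
  have hspos : 0 < s := Real.sqrt_pos.mpr (by linarith)
  have h1 : IntegrableOn φ (Set.Icc 0 R) := hcont.continuousOn.integrableOn_Icc
  have h2 : IntegrableOn φ (Set.Ioi R) := by
    have hbase : IntegrableOn (fun Z : ℝ => 4 / s * Z ^ (-2 : ℝ)) (Set.Ioi R) :=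
      (integrableOn_Ioi_rpow_of_lt (by norm_num) hRpos).const_mul _
    apply Integrable.mono' hbase (hcont.aestronglyMeasurable.restrict)
    rw [ae_restrict_iff' measurableSet_Ioi]
    apply Filter.Eventually.of_forall
    intro Z hZ
    have hZR : R ≤ Z := le_of_lt hZ
    have hZpos : (0:ℝ) < Z := lt_of_lt_of_le hRpos hZR
    have hbd : Z^2/4 * s ≤ f Z ^ k * Real.sqrt (f Z ^ (2*k) - v^2) := by
      exact mul_le_mul (hbig Z hZR) (Real.sqrt_le_sqrt (hsub Z)) hspos.le (pow_pos (hfpos Z) k).le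
    rw [Real.norm_eq_abs, abs_of_nonneg (le_of_lt (one_div_pos.mpr (hdenpos Z)))]
    have hq : (0:ℝ) < Z^2/4*s := by positivity
    calc φ Z ≤ 1 / (Z^2/4*s) := by
          apply one_div_le_one_div_of_le hq hbd
      _ = 4 / s * Z ^ (-2:ℝ) := by
          rw [Real.rpow_neg hZpos.le, show (2:ℝ) = ((2:ℕ):ℝ) by norm_num, Real.rpow_natCast]
          field_simp
  have : IntegrableOn φ (Set.Icc 0 R ∪ Set.Ioi R) := h1.union h2
  apply this.mono_set
  intro x hx
  rcases le_or_gt x R with h | h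
  · exact Or.inl ⟨hx, h⟩
  · exact Or.inr h

/-- For a smooth profile function `f ≥ 1`, `f(0) = 1`, strictly increasing on `[0,∞)`,
with `f(Z)/Z → 1` as `Z → ∞`, the integral
`C_v = ∫₀^∞ dZ / (f(Z)^k √(f(Z)^{2k} − v²))` tends to `∞` as `v → 1⁻`. -/
theorem stmt_3 (k : ℕ) (hk : 2 ≤ k) (f : ℝ → ℝ)
    (hfs : ContDiff ℝ (⊤ : ℕ∞) f) (hf1 : ∀ Z, 1 ≤ f Z) (hf0 : f 0 = 1)
    (hmono : StrictMonoOn f (Set.Ici 0))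
    (hasymp : Tendsto (fun Z : ℝ => f Z / Z) atTop (nhds 1)) :
    Tendsto (fun v : ℝ =>
        ∫ Z in Set.Ici (0 : ℝ), 1 / (f Z ^ k * Real.sqrt (f Z ^ (2 * k) - v ^ 2)))
      (nhdsWithin 1 (Set.Iio 1)) atTop := by
  have hfc : Continuous f := hfs.continuous
  obtain ⟨K, δ, hK, hδ, hδ1, hquad⟩ := quad_bound (fun Z => f Z ^ (2*k)) (hfs.pow _)
    (by simp [hf0]) (fun Z => one_le_pow₀ (hf1 Z))
  set A := f δ ^ k with hAdef
  have hApos : 0 < A := pow_pos (lt_of_lt_of_le one_pos (hf1 δ)) k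
  set b := Real.sqrt K with hbdef
  have hbpos : 0 < b := Real.sqrt_pos.mpr hK
  set L : ℝ → ℝ := fun v => (A*b)⁻¹ *
    (Real.log (Real.sqrt (1 - v^2) + b*δ) - Real.log (Real.sqrt (1-v^2))) with hLdef
  have hIoo : Set.Ioo (0:ℝ) 1 ∈ nhdsWithin 1 (Set.Iio 1) :=
    Ioo_mem_nhdsLT_of_mem (by constructor <;> norm_num)
  -- `L` tends to infinity
  have ht : Tendsto (fun v : ℝ => Real.sqrt (1 - v^2)) (nhdsWithin 1 (Set.Iio 1))
      (nhdsWithin 0 (Set.Ioi 0)) := by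
    rw [tendsto_nhdsWithin_iff]
    constructor
    · have hc : Continuous (fun v : ℝ => Real.sqrt (1 - v^2)) :=
        Real.continuous_sqrt.comp (continuous_const.sub (continuous_pow 2))
      have := (hc.tendsto 1).mono_left (nhdsWithin_le_nhds (s := Set.Iio 1))
      simpa using this
    · filter_upwards [hIoo] with v hv
      exact Real.sqrt_pos.mpr (by nlinarith [hv.1, hv.2])
  have h1 : Tendsto (fun v : ℝ => - Real.log (Real.sqrt (1-v^2)))
      (nhdsWithin 1 (Set.Iio 1)) atTop :=
    tendsto_neg_atBot_atTop.comp (Real.tendsto_log_nhdsGT_zero.comp ht)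
  have h2 : Tendsto (fun v : ℝ => Real.log (Real.sqrt (1-v^2) + b*δ))
      (nhdsWithin 1 (Set.Iio 1)) (nhds (Real.log (b*δ))) := by
    have hadd : Tendsto (fun v : ℝ => Real.sqrt (1-v^2) + b*δ)
        (nhdsWithin 1 (Set.Iio 1)) (nhds (b*δ)) := by
      have := (ht.mono_right nhdsWithin_le_nhds).add_const (b*δ)
      simpa using this
    exact ((Real.continuousAt_log (by positivity : (0:ℝ) < b*δ).ne').tendsto).comp hadd
  have hLtop : Tendsto L (nhdsWithin 1 (Set.Iio 1)) atTop := by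
    have hsum : Tendsto (fun v : ℝ => Real.log (Real.sqrt (1-v^2) + b*δ) +
        (- Real.log (Real.sqrt (1-v^2)))) (nhdsWithin 1 (Set.Iio 1)) atTop :=
      h2.add_atTop h1
    have := hsum.const_mul_atTop (by positivity : (0:ℝ) < (A*b)⁻¹)
    apply this.congr
    intro v; rw [hLdef]; ring
  apply tendsto_atTop_mono' _ _ hLtop
  filter_upwards [hIoo] with v hv
  obtain ⟨hv0, hv1⟩ := hv
  have hv2 : v^2 < 1 := by nlinarith
  set ε := 1 - v^2 with hεdef
  have hεpos : 0 < ε := by linarith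
  set a := Real.sqrt ε with hadef
  have hapos : 0 < a := Real.sqrt_pos.mpr hεpos
  set φ := fun Z => 1 / (f Z ^ k * Real.sqrt (f Z ^ (2*k) - v^2)) with hφdef
  have hint : IntegrableOn φ (Set.Ici 0) := integrable_phi k hk f hfc hf1 hasymp hv2
  have hφpos : ∀ Z, 0 < φ Z := by
    intro Z
    have h1' : (0:ℝ) < f Z ^ k := pow_pos (lt_of_lt_of_le one_pos (hf1 Z)) k
    have h2' : (0:ℝ) < Real.sqrt (f Z ^ (2*k) - v^2) := by
      apply Real.sqrt_pos.mpr
      have : (1:ℝ) ≤ f Z ^ (2*k) := one_le_pow₀ (hf1 Z)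
      linarith
    exact one_div_pos.mpr (mul_pos h1' h2')
  set ψ := fun Z => 1 / (A * (a + b * Z)) with hψdef
  have hψcont : ContinuousOn ψ (Set.Icc 0 δ) := by
    apply ContinuousOn.div continuousOn_const (by fun_prop)
    intro Z hZ
    have : 0 < a + b * Z := by nlinarith [hZ.1]
    positivity
  have hden1pos : ∀ Z, 0 < f Z ^ k * Real.sqrt (f Z ^ (2*k) - v^2) := by
    intro Z
    have h1' : (0:ℝ) < f Z ^ k := pow_pos (lt_of_lt_of_le one_pos (hf1 Z)) k
    have h2' : (0:ℝ) < Real.sqrt (f Z ^ (2*k) - v^2) := by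
      apply Real.sqrt_pos.mpr
      have : (1:ℝ) ≤ f Z ^ (2*k) := one_le_pow₀ (hf1 Z)
      linarith
    exact mul_pos h1' h2'
  have step2 : ∫ Z in Set.Icc (0:ℝ) δ, ψ Z ≤ ∫ Z in Set.Icc (0:ℝ) δ, φ Z := by
    apply setIntegral_mono_on (hψcont.integrableOn_Icc)
      (hint.mono_set Set.Icc_subset_Ici_self) measurableSet_Icc
    intro Z hZ
    have hfZnn : 0 ≤ f Z := (lt_of_lt_of_le one_pos (hf1 Z)).le
    have hfle : f Z ≤ f δ := hmono.monotoneOn hZ.1 (le_trans hZ.1 hZ.2) hZ.2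
    have hpow : f Z ^ k ≤ A := pow_le_pow_left₀ hfZnn hfle k
    have hsq : Real.sqrt (f Z ^ (2*k) - v^2) ≤ a + b * Z := by
      have hq1 : f Z ^ (2*k) - v^2 ≤ ε + K * Z^2 := by
        have := hquad Z hZ
        simp only [hεdef]
        linarith
      have hq2 : ε + K * Z^2 ≤ (a + b*Z)^2 := by
        have ha2 : a^2 = ε := Real.sq_sqrt hεpos.le
        have hb2 : b^2 = K := Real.sq_sqrt hK.le
        nlinarith [mul_nonneg (mul_nonneg hapos.le hbpos.le) hZ.1]
      calc Real.sqrt (f Z ^ (2*k) - v^2) ≤ Real.sqrt ((a + b*Z)^2) :=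
            Real.sqrt_le_sqrt (le_trans hq1 hq2)
        _ = a + b*Z := Real.sqrt_sq (by nlinarith [hZ.1])
    have hsqnn : 0 ≤ Real.sqrt (f Z ^ (2*k) - v^2) := Real.sqrt_nonneg _
    have hle : f Z ^ k * Real.sqrt (f Z ^ (2*k) - v^2) ≤ A * (a + b * Z) :=
      mul_le_mul hpow hsq hsqnn hApos.le
    exact one_div_le_one_div_of_le (hden1pos Z) hle
  have step1 : ∫ Z in Set.Icc (0:ℝ) δ, φ Z ≤ ∫ Z in Set.Ici (0:ℝ), φ Z := by
    apply setIntegral_mono_set hint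
      (Filter.Eventually.of_forall fun Z => (hφpos Z).le)
      (HasSubset.Subset.eventuallyLE Set.Icc_subset_Ici_self)
  have step3 : ∫ Z in Set.Icc (0:ℝ) δ, ψ Z = L v :=
    log_integral A a b δ hApos hapos hbpos hδ
  calc L v = ∫ Z in Set.Icc (0:ℝ) δ, ψ Z := step3.symm
    _ ≤ ∫ Z in Set.Icc (0:ℝ) δ, φ Z := step2
    _ ≤ ∫ Z in Set.Ici (0:ℝ), φ Z := step1
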